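/- For every n ≥ 1, the number of permutations of {1,...,n} avoiding the generalized pattern 13-2 and avoiding the generalized pattern 12-3 equals 2^(n-1). -/
import Mathlib


/-- The value of the permutation at position `i` (0-indexed), or 0 if out of range. -/
def permVal {n : ℕ} (π : Equiv.Perm (Fin n)) (i : ℕ) : ℕ :=
  if h : i < n then (π ⟨i, h⟩ : ℕ) else 0

/-- Number of occurrences of the generalized pattern 12-3. -/
def occ12_3 {n : ℕ} (π : Equiv.Perm (Fin n)) : ℕ :=
  ((Finset.range n ×ˢ Finset.range n).filter (fun p =>
    p.1 + 1 < p.2 ∧ permVal π p.1 < permVal π (p.1 + 1) ∧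
      permVal π (p.1 + 1) < permVal π p.2)).card

/-- Number of occurrences of the generalized pattern 13-2. -/
def occ13_2 {n : ℕ} (π : Equiv.Perm (Fin n)) : ℕ :=
  ((Finset.range n ×ˢ Finset.range n).filter (fun p =>
    p.1 + 1 < p.2 ∧ permVal π p.1 < permVal π p.2 ∧
      permVal π p.2 < permVal π (p.1 + 1))).card

/-- Number of occurrences of the generalized pattern 21-3. -/
def occ21_3 {n : ℕ} (π : Equiv.Perm (Fin n)) : ℕ :=
  ((Finset.range n ×ˢ Finset.range n).filter (fun p =>
    p.1 + 1 < p.2 ∧ permVal π (p.1 + 1) < permVal π p.1 ∧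
      permVal π p.1 < permVal π p.2)).card

/-- Number of occurrences of the generalized pattern 23-1. -/
def occ23_1 {n : ℕ} (π : Equiv.Perm (Fin n)) : ℕ :=
  ((Finset.range n ×ˢ Finset.range n).filter (fun p =>
    p.1 + 1 < p.2 ∧ permVal π p.2 < permVal π p.1 ∧
      permVal π p.1 < permVal π (p.1 + 1))).card

/-- Number of occurrences of the generalized pattern 31-2. -/
def occ31_2 {n : ℕ} (π : Equiv.Perm (Fin n)) : ℕ :=
  ((Finset.range n ×ˢ Finset.range n).filter (fun p =>
    p.1 + 1 < p.2 ∧ permVal π (p.1 + 1) < permVal π p.2 ∧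
      permVal π p.2 < permVal π p.1)).card

/-- Number of occurrences of the generalized pattern 32-1. -/
def occ32_1 {n : ℕ} (π : Equiv.Perm (Fin n)) : ℕ :=
  ((Finset.range n ×ˢ Finset.range n).filter (fun p =>
    p.1 + 1 < p.2 ∧ permVal π p.2 < permVal π (p.1 + 1) ∧
      permVal π (p.1 + 1) < permVal π p.1)).card

lemma permVal_eq {n : ℕ} (π : Equiv.Perm (Fin n)) {i : ℕ} (h : i < n) :
    permVal π i = (π ⟨i, h⟩ : ℕ) := dif_pos h

lemma permVal_lt {n : ℕ} (π : Equiv.Perm (Fin n)) {i : ℕ} (h : i < n) :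
    permVal π i < n := by rw [permVal_eq π h]; exact (π ⟨i, h⟩).isLt

lemma permVal_injOn {n : ℕ} (π : Equiv.Perm (Fin n)) {i j : ℕ} (hi : i < n) (hj : j < n)
    (h : permVal π i = permVal π j) : i = j := by
  rw [permVal_eq π hi, permVal_eq π hj] at h
  have h2 : π ⟨i, hi⟩ = π ⟨j, hj⟩ := Fin.ext h
  have := π.injective h2
  exact congrArg Fin.val this

/-- The combined avoidance property. -/
def Q {n : ℕ} (π : Equiv.Perm (Fin n)) : Prop :=
  ∀ i j : ℕ, i + 1 < j → j < n → permVal π i < permVal π (i + 1) →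
    permVal π j < permVal π i

lemma avoid_iff {n : ℕ} (π : Equiv.Perm (Fin n)) :
    (occ13_2 π = 0 ∧ occ12_3 π = 0) ↔ Q π := by
  rw [occ13_2, occ12_3, Finset.card_eq_zero, Finset.card_eq_zero,
    Finset.filter_eq_empty_iff, Finset.filter_eq_empty_iff]
  constructor
  · rintro ⟨h1, h2⟩ i j hij hjn hasc
    have hin : i < n := by omega
    have hmem : (i, j) ∈ Finset.range n ×ˢ Finset.range n :=
      Finset.mem_product.mpr ⟨Finset.mem_range.mpr hin, Finset.mem_range.mpr hjn⟩
    have H1 := h1 hmem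
    have H2 := h2 hmem
    simp only at H1 H2
    have hne1 : permVal π j ≠ permVal π i := fun h => by
      have := permVal_injOn π hjn hin h; omega
    have hne2 : permVal π j ≠ permVal π (i + 1) := fun h => by
      have := permVal_injOn π hjn (by omega : i + 1 < n) h; omega
    omega
  · intro hQ
    constructor
    · rintro ⟨i, j⟩ hmem ⟨hij, hlt1, hlt2⟩
      simp only [Finset.mem_product, Finset.mem_range] at hmem
      dsimp only at hij hlt1 hlt2
      have := hQ i j hij hmem.2 (lt_trans hlt1 hlt2)
      omega
    · rintro ⟨i, j⟩ hmem ⟨hij, hlt1, hlt2⟩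
      simp only [Finset.mem_product, Finset.mem_range] at hmem
      dsimp only at hij hlt1 hlt2
      have := hQ i j hij hmem.2 hlt1
      omega

/-- Insert value 0 at position `p`, shifting everything else. -/
def insFun (m p : ℕ) (hp : p ≤ m) (σ : Equiv.Perm (Fin m)) (i : Fin (m + 1)) : Fin (m + 1) :=
  if h : (i : ℕ) < p then
    ⟨(σ ⟨i, by omega⟩ : ℕ) + 1, Nat.succ_lt_succ (Fin.is_lt _)⟩
  else if h2 : (i : ℕ) = p then ⟨0, Nat.succ_pos m⟩
  else
    ⟨(σ ⟨(i : ℕ) - 1, by have := i.isLt; omega⟩ : ℕ) + 1, Nat.succ_lt_succ (Fin.is_lt _)⟩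

lemma insFun_injective (m p : ℕ) (hp : p ≤ m) (σ : Equiv.Perm (Fin m)) :
    Function.Injective (insFun m p hp σ) := by
  intro a b hab
  unfold insFun at hab
  split_ifs at hab with h1 h2 h3 h4 h5 h6 h7 h8 h9 <;>
    [skip; skip; skip; skip; skip; skip; skip; skip; skip] <;>
    first
    | (apply Fin.ext
       have e := congrArg Fin.val hab
       simp only at e
       first
       | omega
       | (have e2 : (σ ⟨(a : ℕ), by omega⟩) = σ ⟨(b : ℕ), by omega⟩ := Fin.ext (by omega)
          have := σ.injective e2
          have := congrArg Fin.val this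
          simp only at this
          omega)
       | (have e2 : (σ ⟨(a : ℕ) - 1, by have := a.isLt; omega⟩) =
             σ ⟨(b : ℕ) - 1, by have := b.isLt; omega⟩ := Fin.ext (by omega)
          have := σ.injective e2
          have := congrArg Fin.val this
          simp only at this
          omega)
       | (have e2 : (σ ⟨(a : ℕ), by omega⟩) = σ ⟨(b : ℕ) - 1, by have := b.isLt; omega⟩ :=
            Fin.ext (by omega)
          have := σ.injective e2
          have := congrArg Fin.val this
          simp only at this
          omega)
       | (have e2 : (σ ⟨(a : ℕ) - 1, by have := a.isLt; omega⟩) = σ ⟨(b : ℕ), by omega⟩ :=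
            Fin.ext (by omega)
          have := σ.injective e2
          have := congrArg Fin.val this
          simp only at this
          omega))
    | skip

noncomputable def insPerm (m p : ℕ) (hp : p ≤ m) (σ : Equiv.Perm (Fin m)) : Equiv.Perm (Fin (m + 1)) :=
  Equiv.ofBijective (insFun m p hp σ)
    (Finite.injective_iff_bijective.mp (insFun_injective m p hp σ))

lemma permVal_ins_of_lt {m p : ℕ} (hp : p ≤ m) (σ : Equiv.Perm (Fin m)) {i : ℕ} (h : i < p) :
    permVal (insPerm m p hp σ) i = permVal σ i + 1 := by
  have hi : i < m + 1 := by omega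
  rw [permVal_eq _ hi, permVal_eq σ (by omega : i < m)]
  show (insFun m p hp σ ⟨i, hi⟩ : ℕ) = _
  unfold insFun
  rw [dif_pos (show ((⟨i, hi⟩ : Fin (m+1)) : ℕ) < p from h)]

lemma permVal_ins_self {m p : ℕ} (hp : p ≤ m) (σ : Equiv.Perm (Fin m)) :
    permVal (insPerm m p hp σ) p = 0 := by
  have hi : p < m + 1 := by omega
  rw [permVal_eq _ hi]
  show (insFun m p hp σ ⟨p, hi⟩ : ℕ) = _
  unfold insFun
  rw [dif_neg (by simp), dif_pos rfl]

lemma permVal_ins_of_gt {m p : ℕ} (hp : p ≤ m) (σ : Equiv.Perm (Fin m)) {i : ℕ}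
    (h1 : p < i) (h2 : i < m + 1) :
    permVal (insPerm m p hp σ) i = permVal σ (i - 1) + 1 := by
  rw [permVal_eq _ h2, permVal_eq σ (by omega : i - 1 < m)]
  show (insFun m p hp σ ⟨i, h2⟩ : ℕ) = _
  unfold insFun
  rw [dif_neg (by simp; omega), dif_neg (by simp; omega)]

lemma Q_insPerm {m p : ℕ} (hp : p ≤ m) (hpm : m ≤ p + 1) {σ : Equiv.Perm (Fin m)}
    (hσ : Q σ) : Q (insPerm m p hp σ) := by
  intro i j hij hjn hasc
  rcases lt_trichotomy (i + 1) p with hc | hc | hc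
  · -- i, i+1 < p
    have hi : i < p := by omega
    rw [permVal_ins_of_lt hp σ hi, permVal_ins_of_lt hp σ hc] at hasc
    have hasc' : permVal σ i < permVal σ (i + 1) := by omega
    rw [permVal_ins_of_lt hp σ hi]
    rcases lt_trichotomy j p with hj | hj | hj
    · rw [permVal_ins_of_lt hp σ hj]
      have := hσ i j hij (by omega) hasc'
      omega
    · rw [hj, permVal_ins_self hp σ]; omega
    · rw [permVal_ins_of_gt hp σ hj hjn]
      have := hσ i (j - 1) (by omega) (by omega) hasc'
      omega
  · -- i + 1 = p : v (i+1) = 0, no ascent possible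
    exfalso
    subst hc
    rw [permVal_ins_self hp σ, permVal_ins_of_lt hp σ (Nat.lt_succ_self i)] at hasc
    omega
  · rcases lt_trichotomy i p with hc2 | hc2 | hc2
    · omega
    · -- i = p : then j > p + 1 ≥ m, but j < m + 1, contradiction
      omega
    · -- all of i, i+1, j are > p
      rw [permVal_ins_of_gt hp σ hc2 (by omega), permVal_ins_of_gt hp σ (by omega) (by omega)]
        at hasc
      rw [permVal_ins_of_gt hp σ hc2 (by omega), permVal_ins_of_gt hp σ (by omega) hjn]
      have heq : i + 1 - 1 = (i - 1) + 1 := by omega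
      rw [heq] at hasc
      have := hσ (i - 1) (j - 1) (by omega) (by omega) (by omega)
      omega

/-- Position of value 0. -/
def pos0 {m : ℕ} (π : Equiv.Perm (Fin (m + 1))) : ℕ := (π.symm 0 : ℕ)

lemma pos0_le {m : ℕ} (π : Equiv.Perm (Fin (m + 1))) : pos0 π ≤ m :=
  Nat.lt_succ_iff.mp (π.symm 0).isLt

lemma permVal_pos0 {m : ℕ} (π : Equiv.Perm (Fin (m + 1))) : permVal π (pos0 π) = 0 := by
  rw [permVal_eq π (Nat.lt_succ_of_le (pos0_le π))]
  have : (⟨pos0 π, Nat.lt_succ_of_le (pos0_le π)⟩ : Fin (m + 1)) = π.symm 0 := rfl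
  rw [this, Equiv.apply_symm_apply]
  rfl

lemma permVal_pos_of_ne {m : ℕ} (π : Equiv.Perm (Fin (m + 1))) {i : ℕ} (h : i < m + 1)
    (hne : i ≠ pos0 π) : 0 < permVal π i := by
  rw [permVal_eq π h]
  rcases (Nat.eq_zero_or_pos (π ⟨i, h⟩ : ℕ)).symm with hp | hp
  · exact hp
  · exfalso
    have : π ⟨i, h⟩ = 0 := Fin.ext hp
    have : (⟨i, h⟩ : Fin (m + 1)) = π.symm 0 := by
      rw [← this, Equiv.symm_apply_apply]
    exact hne (congrArg Fin.val this)

lemma pos0_ge {m : ℕ} {π : Equiv.Perm (Fin (m + 1))} (hQ : Q π) : m ≤ pos0 π + 1 := by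
  by_contra hcon
  push_neg at hcon
  set q := pos0 π with hq
  have hqle := pos0_le π
  have hasc : permVal π q < permVal π (q + 1) := by
    rw [permVal_pos0 π]
    exact permVal_pos_of_ne π (by omega) (by omega)
  have := hQ q (q + 2) (by omega) (by omega) hasc
  rw [permVal_pos0 π] at this
  omega

def delFun (m : ℕ) (π : Equiv.Perm (Fin (m + 1))) (i : Fin m) : Fin m :=
  if h : (i : ℕ) < pos0 π then
    ⟨(π ⟨i, by have := i.isLt; omega⟩ : ℕ) - 1, by
      have := (π ⟨(i : ℕ), by have := i.isLt; omega⟩).isLt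
      have := i.isLt; omega⟩
  else
    ⟨(π ⟨(i : ℕ) + 1, by have := i.isLt; omega⟩ : ℕ) - 1, by
      have := (π ⟨(i : ℕ) + 1, by have := i.isLt; omega⟩).isLt
      have := i.isLt; omega⟩

lemma delFun_injective (m : ℕ) (π : Equiv.Perm (Fin (m + 1))) :
    Function.Injective (delFun m π) := by
  intro a b hab
  have key : ∀ c : Fin m, ∃ j : ℕ, ∃ hj : j < m + 1, j ≠ pos0 π ∧
      ((delFun m π c : ℕ) = (π ⟨j, hj⟩ : ℕ) - 1) ∧
      (((c : ℕ) < pos0 π ∧ j = c) ∨ (pos0 π ≤ (c : ℕ) ∧ j = c + 1)) := by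
    intro c
    unfold delFun
    split_ifs with h
    · exact ⟨c, by have := c.isLt; omega, by omega, rfl, Or.inl ⟨h, rfl⟩⟩
    · exact ⟨(c : ℕ) + 1, by have := c.isLt; omega, by omega, rfl, Or.inr ⟨by omega, rfl⟩⟩
  obtain ⟨ja, hja, hna, hva, hca⟩ := key a
  obtain ⟨jb, hjb, hnb, hvb, hcb⟩ := key b
  have hval : (delFun m π a : ℕ) = (delFun m π b : ℕ) := congrArg Fin.val hab
  have hpa : 0 < (π ⟨ja, hja⟩ : ℕ) := by
    have := permVal_pos_of_ne π hja hna
    rwa [permVal_eq π hja] at this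
  have hpb : 0 < (π ⟨jb, hjb⟩ : ℕ) := by
    have := permVal_pos_of_ne π hjb hnb
    rwa [permVal_eq π hjb] at this
  have hπeq : π ⟨ja, hja⟩ = π ⟨jb, hjb⟩ := Fin.ext (by omega)
  have hjeq : ja = jb := congrArg Fin.val (π.injective hπeq)
  exact Fin.ext (by omega)

noncomputable def delPerm (m : ℕ) (π : Equiv.Perm (Fin (m + 1))) : Equiv.Perm (Fin m) :=
  Equiv.ofBijective (delFun m π) (Finite.injective_iff_bijective.mp (delFun_injective m π))

lemma permVal_del_of_lt {m : ℕ} (π : Equiv.Perm (Fin (m + 1))) {i : ℕ}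
    (h : i < pos0 π) (him : i < m) :
    permVal (delPerm m π) i = permVal π i - 1 := by
  rw [permVal_eq _ him, permVal_eq π (by omega : i < m + 1)]
  show (delFun m π ⟨i, him⟩ : ℕ) = _
  unfold delFun
  rw [dif_pos (show ((⟨i, him⟩ : Fin m) : ℕ) < pos0 π from h)]

lemma permVal_del_of_ge {m : ℕ} (π : Equiv.Perm (Fin (m + 1))) {i : ℕ}
    (h : pos0 π ≤ i) (him : i < m) :
    permVal (delPerm m π) i = permVal π (i + 1) - 1 := by
  rw [permVal_eq _ him, permVal_eq π (by omega : i + 1 < m + 1)]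
  show (delFun m π ⟨i, him⟩ : ℕ) = _
  unfold delFun
  rw [dif_neg (by simp; omega)]

lemma Q_delPerm {m : ℕ} {π : Equiv.Perm (Fin (m + 1))} (hQ : Q π) : Q (delPerm m π) := by
  intro i j hij hjm hasc
  have hq1 := pos0_le π
  have hq2 := pos0_ge hQ
  set q := pos0 π with hqdef
  have hi_lt : i < q := by omega
  have hi1_lt : i + 1 < q := by omega
  rw [permVal_del_of_lt π hi_lt (by omega), permVal_del_of_lt π hi1_lt (by omega)] at hasc
  rw [permVal_del_of_lt π hi_lt (by omega)]
  have hvi : 0 < permVal π i := permVal_pos_of_ne π (by omega) (by omega)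
  have hvi1 : 0 < permVal π (i + 1) := permVal_pos_of_ne π (by omega) (by omega)
  have hasc' : permVal π i < permVal π (i + 1) := by omega
  rcases lt_or_ge j q with hj | hj
  · rw [permVal_del_of_lt π hj hjm]
    have hvj : 0 < permVal π j := permVal_pos_of_ne π (by omega) (by omega)
    have := hQ i j hij (by omega) hasc'
    omega
  · rw [permVal_del_of_ge π hj hjm]
    have hvj : 0 < permVal π (j + 1) := permVal_pos_of_ne π (by omega) (by omega)
    have := hQ i (j + 1) (by omega) (by omega) hasc'
    omega

lemma permVal_val {n : ℕ} (π : Equiv.Perm (Fin n)) (i : Fin n) :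
    permVal π (i : ℕ) = (π i : ℕ) := by
  rw [permVal_eq π i.isLt, Fin.eta]

lemma ins_del {m : ℕ} (π : Equiv.Perm (Fin (m + 1))) :
    insPerm m (pos0 π) (pos0_le π) (delPerm m π) = π := by
  apply Equiv.ext
  intro i
  apply Fin.ext
  rw [← permVal_val, ← permVal_val]
  have hi := i.isLt
  have hqle := pos0_le π
  rcases lt_trichotomy (i : ℕ) (pos0 π) with hc | hc | hc
  · rw [permVal_ins_of_lt _ _ hc, permVal_del_of_lt π hc (by omega)]
    have h2 : 0 < permVal π i := permVal_pos_of_ne π hi (by omega)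
    omega
  · rw [hc, permVal_ins_self, permVal_pos0]
  · rw [permVal_ins_of_gt _ _ hc hi,
      permVal_del_of_ge π (by omega : pos0 π ≤ (i : ℕ) - 1) (by omega)]
    have heq : (i : ℕ) - 1 + 1 = (i : ℕ) := by omega
    rw [heq]
    have h2 : 0 < permVal π i := permVal_pos_of_ne π hi (by omega)
    omega

lemma pos0_ins {m p : ℕ} (hp : p ≤ m) (σ : Equiv.Perm (Fin m)) :
    pos0 (insPerm m p hp σ) = p := by
  have h0 : (insPerm m p hp σ) ⟨p, by omega⟩ = 0 := by
    apply Fin.ext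
    have := permVal_ins_self hp σ
    rw [show permVal (insPerm m p hp σ) p
        = ((insPerm m p hp σ) ⟨p, by omega⟩ : ℕ) from permVal_eq _ (by omega)] at this
    simp [this]
  have : (insPerm m p hp σ).symm 0 = ⟨p, by omega⟩ := by
    rw [Equiv.symm_apply_eq, h0]
  rw [pos0, this]

lemma del_ins {m p : ℕ} (hp : p ≤ m) (σ : Equiv.Perm (Fin m)) :
    delPerm m (insPerm m p hp σ) = σ := by
  apply Equiv.ext
  intro i
  apply Fin.ext
  rw [← permVal_val, ← permVal_val]
  have hi := i.isLt
  rcases lt_or_ge (i : ℕ) p with hc | hc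
  · rw [permVal_del_of_lt _ (by rw [pos0_ins hp σ]; exact hc) hi,
      permVal_ins_of_lt hp σ hc]
    omega
  · rw [permVal_del_of_ge _ (by rw [pos0_ins hp σ]; omega) hi,
      permVal_ins_of_gt hp σ (by omega) (by omega)]
    have heq : (i : ℕ) + 1 - 1 = (i : ℕ) := by omega
    rw [heq]
    omega

lemma insPerm_congr {m : ℕ} {p1 p2 : ℕ} (h1 : p1 ≤ m) (h2 : p2 ≤ m) (σ : Equiv.Perm (Fin m))
    (h : p1 = p2) : insPerm m p1 h1 σ = insPerm m p2 h2 σ := by subst h; rfl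

lemma step (m : ℕ) (hm : 1 ≤ m) :
    (Finset.univ.filter (fun π : Equiv.Perm (Fin (m + 1)) =>
      occ13_2 π = 0 ∧ occ12_3 π = 0)).card
    = 2 * (Finset.univ.filter (fun π : Equiv.Perm (Fin m) =>
      occ13_2 π = 0 ∧ occ12_3 π = 0)).card := by
  have hcard : (Finset.univ.filter (fun π : Equiv.Perm (Fin (m + 1)) =>
      occ13_2 π = 0 ∧ occ12_3 π = 0)).card
      = ((Finset.univ.filter (fun π : Equiv.Perm (Fin m) =>
        occ13_2 π = 0 ∧ occ12_3 π = 0)) ×ˢ (Finset.univ : Finset Bool)).card := by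
    refine Finset.card_bij' (fun π _ => (delPerm m π, decide (pos0 π = m)))
      (fun σb _ => insPerm m (if σb.2 then m else m - 1) (by split <;> omega) σb.1)
      ?_ ?_ ?_ ?_
    · -- hi
      intro π hπ
      rw [Finset.mem_filter] at hπ
      have hQ := (avoid_iff π).mp hπ.2
      rw [Finset.mem_product, Finset.mem_filter]
      exact ⟨⟨Finset.mem_univ _, (avoid_iff _).mpr (Q_delPerm hQ)⟩, Finset.mem_univ _⟩
    · -- hj
      rintro ⟨σ, b⟩ hσb
      rw [Finset.mem_product, Finset.mem_filter] at hσb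
      have hQ := (avoid_iff σ).mp hσb.1.2
      rw [Finset.mem_filter]
      exact ⟨Finset.mem_univ _, (avoid_iff _).mpr (Q_insPerm _ (by split <;> omega) hQ)⟩
    · -- left inverse
      intro π hπ
      rw [Finset.mem_filter] at hπ
      have hQ := (avoid_iff π).mp hπ.2
      have hq1 := pos0_le π
      have hq2 := pos0_ge hQ
      dsimp only
      rw [insPerm_congr _ (pos0_le π) _ (by rcases eq_or_ne (pos0 π) m with h | h <;>
        simp [h] <;> omega)]
      exact ins_del π
    · -- right inverse
      rintro ⟨σ, b⟩ hσb
      dsimp only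
      refine Prod.ext ?_ ?_
      · exact del_ins _ σ
      · show decide (pos0 (insPerm m _ _ σ) = m) = b
        rw [pos0_ins]
        cases b
        · simp only [Bool.cond_false, if_neg, decide_eq_false_iff_not]
          simp only [Bool.false_eq_true, if_false]
          omega
        · simp
  rw [hcard, Finset.card_product]
  simp [Finset.card_univ, mul_comm]

theorem stmt10 (n : ℕ) (hn : 1 ≤ n) :
    (Finset.univ.filter (fun π : Equiv.Perm (Fin n) =>
      occ13_2 π = 0 ∧ occ12_3 π = 0)).card = 2 ^ (n - 1) := by
  induction n with
  | zero => omega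
  | succ m ih =>
    rcases Nat.eq_zero_or_pos m with hm | hm
    · subst hm
      have hall : ∀ π : Equiv.Perm (Fin 1), occ13_2 π = 0 ∧ occ12_3 π = 0 := by
        intro π
        refine (avoid_iff π).mpr ?_
        intro i j h1 h2
        omega
      rw [Finset.filter_true_of_mem (fun π _ => hall π)]
      simp [Finset.card_univ]
    · rw [step m hm, ih hm]
      have h1 : m + 1 - 1 = m := rfl
      have h2 : 2 * 2 ^ (m - 1) = 2 ^ (m - 1 + 1) := (pow_succ' 2 (m-1)).symm
      rw [h1, h2]
      congr 1
      omega
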